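/- Let X₁,…,X_n (n ≥ 2) be i.i.d. with law P on ℝ^d, with augmented data (Xᵢ, Xᵢ'), and for α ∈ (0,1) let c_{1−α} be the resampling cutoff. Then c_{1−α} ≤ 2/(α(n−1)) holds with probability one, for every Borel probability measure P and every dimension d. -/

import Mathlib

open MeasureTheory Filter
open scoped ENNReal NNReal Classical RealInnerProductSpace

noncomputable section

/-- Euclidean space `ℝ^d`. -/
abbrev Euc (d : ℕ) := EuclideanSpace ℝ (Fin d)

/-- A Borel probability measure on `ℝ^d` is *spherically symmetric* if its pushforward under
every orthogonal transformation (equivalently, every linear isometry equivalence) equals itself. -/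
def sphSymm (d : ℕ) (P : Measure (Euc d)) : Prop :=
  ∀ f : Euc d ≃ₗᵢ[ℝ] Euc d, P.map f = P

/-- `μ` is the uniform distribution on the unit sphere `S^{d-1}`: the unique rotation-invariant
Borel probability measure supported on the unit sphere. -/
def isUnifSphere (d : ℕ) (μ : Measure (Euc d)) : Prop :=
  IsProbabilityMeasure μ ∧ μ (Metric.sphere (0 : Euc d) 1)ᶜ = 0 ∧
    ∀ f : Euc d ≃ₗᵢ[ℝ] Euc d, μ.map f = μ

/-- The law of `‖X‖ U` where `X ~ P` and `U ~ μU` are independent. -/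
def sphLaw (d : ℕ) (P μU : Measure (Euc d)) : Measure (Euc d) :=
  (P.prod μU).map (fun p => ‖p.1‖ • p.2)

/-- The kernel `K(x,y) = exp(-‖x-y‖²/(2d))`. -/
def Kf (d : ℕ) (x y : Euc d) : ℝ := Real.exp (-‖x - y‖ ^ 2 / (2 * (d : ℝ)))

/-- The joint law of the augmented pair `(X, ‖X‖U)`, `X ~ P`, `U ~ μU` independent. -/
def augLaw (d : ℕ) (P μU : Measure (Euc d)) : Measure (Euc d × Euc d) :=
  (P.prod μU).map (fun p => (p.1, ‖p.1‖ • p.2))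

/-- `ζ(P) = E K(X₁,X₂) + E K(X₁',X₂') - 2 E K(X₁,X₂')` where `(X₁,X₁'), (X₂,X₂')` are
i.i.d. augmented pairs. -/
def zetaE (d : ℕ) (P μU : Measure (Euc d)) : ℝ :=
  ∫ p, ∫ q, (Kf d p.1 q.1 + Kf d p.2 q.2 - 2 * Kf d p.1 q.2)
    ∂(augLaw d P μU) ∂(augLaw d P μU)

/-- The symmetrized U-statistic kernel `g`. -/
def gk (d : ℕ) (p q : Euc d × Euc d) : ℝ :=
  Kf d p.1 q.1 + Kf d p.2 q.2 - Kf d p.1 q.2 - Kf d q.1 p.2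

/-- The U-statistic `ζ̂_n` computed from augmented observations. -/
def zetaHat (d n : ℕ) (ω : Fin n → Euc d × Euc d) : ℝ :=
  ((n : ℝ) * ((n : ℝ) - 1) / 2)⁻¹ *
    ∑ i : Fin n, ∑ j : Fin n, if i < j then gk d (ω i) (ω j) else 0

/-- Law of the i.i.d. sample of augmented observations `(Xᵢ, Xᵢ') = (Xᵢ, ‖Xᵢ‖Uᵢ)`. -/
def sampleLaw (d n : ℕ) (P μU : Measure (Euc d)) : Measure (Fin n → Euc d × Euc d) :=
  Measure.pi fun _ => augLaw d P μU

/-- The resampled statistic `ζ̂_n(π)`: `Yᵢ = π(i)Xᵢ + (1-π(i))Xᵢ'` etc. -/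
def zetaHatPerm (d n : ℕ) (π : Fin n → Bool) (ω : Fin n → Euc d × Euc d) : ℝ :=
  zetaHat d n fun i => if π i then ω i else ((ω i).2, (ω i).1)

/-- The resampling p-value `p_n = 2^{-n} ∑_π I[ζ̂_n(π) ≥ ζ̂_n]`. -/
def pval (d n : ℕ) (ω : Fin n → Euc d × Euc d) : ℝ :=
  ((Finset.univ.filter fun π : Fin n → Bool =>
      zetaHat d n ω ≤ zetaHatPerm d n π ω).card : ℝ) / 2 ^ n

/-- The resampling cutoff `c_{1-α}`. -/
def cutoff (α : ℝ) (d n : ℕ) (ω : Fin n → Euc d × Euc d) : ℝ :=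
  sInf {t : ℝ | 1 - α ≤
    ((Finset.univ.filter fun π : Fin n → Bool =>
        zetaHatPerm d n π ω ≤ t).card : ℝ) / 2 ^ n}

/-- Characteristic function of a measure on `ℝ^d`. -/
def charFn (d : ℕ) (P : Measure (Euc d)) (t : Euc d) : ℂ :=
  ∫ x, Complex.exp (Complex.I * ((inner ℝ t x : ℝ) : ℂ)) ∂P

/-- Density of the `N(0, d⁻¹ I_d)` Gaussian on `ℝ^d`. -/
def gaussDens (d : ℕ) (t : Euc d) : ℝ :=
  ((d : ℝ) / (2 * Real.pi)) ^ ((d : ℝ) / 2) * Real.exp (-((d : ℝ) * ‖t‖ ^ 2) / 2)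

/-- `ζ(P)`, defined through characteristic functions. -/
def zetaCF (d : ℕ) (P μU : Measure (Euc d)) : ℝ :=
  ∫ t, ‖charFn d P t - charFn d (sphLaw d P μU) t‖ ^ 2 * gaussDens d t

/-!
The Gaussian kernel is positive definite (Schur's product theorem and the exponential series),
so `∑ᵢ ∑ⱼ g((Xᵢ, Xᵢ'), (Xⱼ, Xⱼ'))` is a squared kernel distance and hence nonnegative; since
the diagonal terms are at most `2`, every resampled statistic is at least `-2/(n-1)`. Flipping
the `i`-th coin negates every term involving `i`, so the `2ⁿ` resampled statistics sum to zero.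
Markov's inequality for the shifted values `ζ̂_n(π) + 2/(n-1)` then leaves at most an
`α`-fraction of them above `2/(α(n-1))`.
-/

namespace Matrix

variable {ι : Type*} [Fintype ι]

theorem PosSemidef.map_pow {A : Matrix ι ι ℝ} (hA : A.PosSemidef) (k : ℕ) :
    (A.map (· ^ k)).PosSemidef := by
  induction k with
  | zero =>
    have hones : A.map (· ^ 0) = gram ℝ (fun _ : ι => (1 : ℝ)) := by ext; simp [gram]
    rw [hones]
    exact posSemidef_gram ℝ _
  | succ k ih =>
    have hsucc : A.map (· ^ (k + 1)) = A.map (· ^ k) ⊙ A := by ext; simp [pow_succ]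
    rw [hsucc]
    exact ih.hadamard hA

theorem PosSemidef.map_exp {A : Matrix ι ι ℝ} (hA : A.PosSemidef) :
    (A.map Real.exp).PosSemidef := by
  refine .of_dotProduct_mulVec_nonneg ?_ fun x => ?_
  · ext i j
    simpa using congrArg Real.exp (hA.isHermitian.apply i j)
  · have h : HasSum (fun k : ℕ => (k.factorial : ℝ)⁻¹ * (x ⬝ᵥ A.map (· ^ k) *ᵥ x))
        (x ⬝ᵥ A.map Real.exp *ᵥ x) := by
      simp only [dotProduct, mulVec, Finset.mul_sum, map_apply]
      refine hasSum_sum fun i _ => hasSum_sum fun j _ => ?_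
      have hexp := (NormedSpace.expSeries_div_hasSum_exp (A i j)).mul_left (x i * x j)
      rw [← Real.exp_eq_exp_ℝ] at hexp
      rw [show x i * (Real.exp (A i j) * x j) = x i * x j * Real.exp (A i j) by ring]
      exact hexp.congr_fun fun k => by ring
    exact h.nonneg fun k =>
      mul_nonneg (by positivity) ((hA.map_pow k).dotProduct_mulVec_nonneg x)

theorem posSemidef_exp_neg_mul_norm_sub_sq {E : Type*} [NormedAddCommGroup E]
    [InnerProductSpace ℝ E] {c : ℝ} (hc : 0 ≤ c) (y : ι → E) :
    (of fun i j => Real.exp (-c * ‖y i - y j‖ ^ 2)).PosSemidef := by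
  classical
  let f : ι → ℝ := fun i => Real.exp (-c * ‖y i‖ ^ 2)
  have hfactor : (of fun i j => Real.exp (-c * ‖y i - y j‖ ^ 2))
      = (diagonal f)ᴴ * (((2 * c) • gram ℝ y).map Real.exp) * diagonal f := by
    ext i j
    simp only [of_apply, diagonal_conjTranspose, mul_diagonal, diagonal_mul, map_apply,
      smul_apply, gram_apply, smul_eq_mul, f, star_trivial, ← Real.exp_add, norm_sub_sq_real]
    ring_nf
  rw [hfactor]
  exact ((posSemidef_gram ℝ y).smul (by positivity)).map_exp.conjTranspose_mul_mul_same _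

end Matrix

theorem Kf_comm (d : ℕ) (x y : Euc d) : Kf d x y = Kf d y x := by
  rw [Kf, Kf, norm_sub_rev]

theorem Kf_self (d : ℕ) (x : Euc d) : Kf d x x = 1 := by
  simp [Kf]

theorem posSemidef_Kf {ι : Type*} [Fintype ι] (d : ℕ) (y : ι → Euc d) :
    (Matrix.of fun i j => Kf d (y i) (y j)).PosSemidef := by
  simpa only [Kf, neg_div, div_eq_inv_mul, neg_mul, mul_neg] using
    Matrix.posSemidef_exp_neg_mul_norm_sub_sq (c := (2 * (d : ℝ))⁻¹) (by positivity) y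

theorem gk_comm (d : ℕ) (p q : Euc d × Euc d) : gk d p q = gk d q p := by
  rw [gk, gk, Kf_comm d p.1, Kf_comm d p.2, Kf_comm d p.1 q.2]
  ring

theorem gk_swap_left (d : ℕ) (p q : Euc d × Euc d) : gk d p.swap q = -gk d p q := by
  rw [gk, gk, Prod.fst_swap, Prod.snd_swap, Kf_comm d q.1 p.2, Kf_comm d q.1 p.1]
  ring

theorem gk_self_le_two (d : ℕ) (p : Euc d × Euc d) : gk d p p ≤ 2 := by
  have hK : 0 ≤ Kf d p.1 p.2 := (Real.exp_pos _).le
  rw [gk, Kf_self, Kf_self]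
  linarith

/-- The double sum is the squared kernel distance between the empirical measures of the first and
of the second coordinates, hence nonnegative. -/
theorem sum_sum_gk_nonneg {ι : Type*} [Fintype ι] (d : ℕ) (ω : ι → Euc d × Euc d) :
    0 ≤ ∑ i, ∑ j, gk d (ω i) (ω j) := by
  have h := (posSemidef_Kf d (Sum.elim (fun i => (ω i).1) (fun i => (ω i).2)))
    |>.dotProduct_mulVec_nonneg (Sum.elim 1 (-1))
  simp only [dotProduct, Matrix.mulVec, Fintype.sum_sum_type, Matrix.of_apply, Sum.elim_inl,
    Sum.elim_inr, star_trivial, Pi.one_apply, Pi.neg_apply, one_mul, neg_one_mul, mul_one,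
    mul_neg, Finset.sum_neg_distrib, Finset.sum_add_distrib] at h
  have hcross : ∑ i, ∑ j, Kf d (ω j).1 (ω i).2 = ∑ i, ∑ j, Kf d (ω i).2 (ω j).1 := by
    simp only [Kf_comm d (ω _).1]
  simp only [gk, Finset.sum_add_distrib, Finset.sum_sub_distrib, hcross]
  linarith

theorem Finset.sum_sum_eq_two_nsmul_sum_sum_ite_lt_add {ι M : Type*} [Fintype ι]
    [LinearOrder ι] [AddCommMonoid M] {f : ι → ι → M} (hf : ∀ i j, f i j = f j i) :
    ∑ i, ∑ j, f i j = 2 • ∑ i, ∑ j, (if i < j then f i j else 0) + ∑ i, f i i := by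
  have hsplit : ∀ i j, f i j = (if i < j then f i j else 0) + (if j < i then f j i else 0)
      + (if i = j then f i j else 0) := by
    intro i j
    rcases lt_trichotomy i j with h | rfl | h
    · simp [h, h.not_gt, h.ne]
    · simp
    · simp [h, h.not_gt, h.ne', hf i j]
  rw [Finset.sum_congr rfl fun i _ => Finset.sum_congr rfl fun j _ => hsplit i j]
  simp only [Finset.sum_add_distrib, Finset.sum_ite_eq, Finset.mem_univ, if_true]
  rw [Finset.sum_comm (f := fun i j => if j < i then f j i else 0), two_nsmul]

theorem neg_two_div_le_zetaHat (d : ℕ) {n : ℕ} (hn : 2 ≤ n) (ω : Fin n → Euc d × Euc d) :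
    -2 / ((n : ℝ) - 1) ≤ zetaHat d n ω := by
  have hn' : (2 : ℝ) ≤ n := by exact_mod_cast hn
  set T := ∑ i : Fin n, ∑ j : Fin n, if i < j then gk d (ω i) (ω j) else 0
  have hdiag : ∑ i, gk d (ω i) (ω i) ≤ 2 * n := by
    simpa [mul_comm] using
      Finset.sum_le_sum fun i (_ : i ∈ Finset.univ) => gk_self_le_two d (ω i)
  have hT : -(n : ℝ) ≤ T := by
    have h := sum_sum_gk_nonneg d ω
    rw [Finset.sum_sum_eq_two_nsmul_sum_sum_ite_lt_add fun i j => gk_comm d (ω i) (ω j),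
      two_nsmul] at h
    linarith
  have hnorm : -2 / ((n : ℝ) - 1) = ((n : ℝ) * ((n : ℝ) - 1) / 2)⁻¹ * -(n : ℝ) := by
    field_simp [show (n : ℝ) - 1 ≠ 0 by linarith]
  rw [hnorm, zetaHat]
  exact mul_le_mul_of_nonneg_left hT (inv_nonneg.mpr (by nlinarith))

theorem Fintype.sum_eq_zero_of_add_update_not_eq_zero {ι M : Type*} [Fintype ι] [DecidableEq ι]
    [AddCommMonoid M] (i : ι) {F : (ι → Bool) → M}
    (hF : ∀ π, F π + F (Function.update π i (!π i)) = 0) :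
    ∑ π, F π = 0 :=
  Finset.sum_ninvolution (fun π => Function.update π i (!π i)) hF
    (fun π _ h => by simpa using congrFun h i) (fun _ => Finset.mem_univ _)
    (fun π => by simp)

theorem sum_zetaHatPerm_eq_zero (d n : ℕ) (ω : Fin n → Euc d × Euc d) :
    ∑ π : Fin n → Bool, zetaHatPerm d n π ω = 0 := by
  have hflip : ∀ (b : Bool) (p q : Euc d × Euc d),
      gk d (if b then p else p.swap) q + gk d (if !b then p else p.swap) q = 0 := by
    rintro (_ | _) p q <;> simp [gk_swap_left]
  have hpair : ∀ i j : Fin n, i < j → ∑ π : Fin n → Bool,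
      gk d (if π i then ω i else (ω i).swap) (if π j then ω j else (ω j).swap) = 0 := by
    intro i j hij
    refine Fintype.sum_eq_zero_of_add_update_not_eq_zero i fun π => ?_
    simpa [Function.update_of_ne hij.ne'] using hflip (π i) (ω i) _
  simp only [zetaHatPerm, zetaHat, ← Finset.mul_sum]
  rw [Finset.sum_comm]
  refine mul_eq_zero_of_right _ (Finset.sum_eq_zero fun i _ => ?_)
  rw [Finset.sum_comm]
  refine Finset.sum_eq_zero fun j _ => ?_
  split_ifs with hij
  · exact hpair i j hij
  · simp

theorem sInf_quantile_le_div {ι : Type*} [Fintype ι] [Nonempty ι] {v : ι → ℝ} {m α : ℝ}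
    (hm : 0 < m) (hα : α ∈ Set.Ioo (0 : ℝ) 1) (hsum : ∑ i, v i = 0) (hv : ∀ i, -m ≤ v i) :
    sInf {t : ℝ | 1 - α ≤
      ((Finset.univ.filter fun i => v i ≤ t).card : ℝ) / Fintype.card ι} ≤ m / α := by
  obtain ⟨hα0, hα1⟩ := hα
  have hN : (0 : ℝ) < Fintype.card ι := by exact_mod_cast Fintype.card_pos
  set t := m / α with ht
  have hmarkov : ((Finset.univ.filter fun i => ¬ v i ≤ t).card : ℝ) * (t + m)
      ≤ Fintype.card ι * m :=
    calc ((Finset.univ.filter fun i => ¬ v i ≤ t).card : ℝ) * (t + m)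
        ≤ ∑ i ∈ Finset.univ.filter fun i => ¬ v i ≤ t, (v i + m) := by
          rw [← nsmul_eq_mul]
          exact Finset.card_nsmul_le_sum _ _ _ fun i hi => by
            linarith [not_le.mp (Finset.mem_filter.mp hi).2]
      _ ≤ ∑ i, (v i + m) :=
          Finset.sum_le_sum_of_subset_of_nonneg (Finset.subset_univ _)
            fun i _ _ => by linarith [hv i]
      _ = Fintype.card ι * m := by
          simp [Finset.sum_add_distrib, hsum]
  have hcard := Finset.card_filter_add_card_filter_not (s := Finset.univ) fun i => v i ≤ t
  rw [Finset.card_univ] at hcard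
  have hsplit : (Fintype.card ι : ℝ) = (Finset.univ.filter fun i => v i ≤ t).card
      + (Finset.univ.filter fun i => ¬ v i ≤ t).card := by exact_mod_cast hcard.symm
  have hbad : ((Finset.univ.filter fun i => ¬ v i ≤ t).card : ℝ) ≤ α * Fintype.card ι := by
    have hbad0 : (0 : ℝ) ≤ (Finset.univ.filter fun i => ¬ v i ≤ t).card := Nat.cast_nonneg _
    rw [show t + m = m * (1 + α) / α by rw [ht]; field_simp, mul_div_assoc',
      div_le_iff₀ hα0] at hmarkov
    nlinarith [mul_nonneg hbad0 hα0.le]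
  have hmem : 1 - α ≤ ((Finset.univ.filter fun i => v i ≤ t).card : ℝ) / Fintype.card ι := by
    rw [le_div_iff₀ hN]
    rw [hsplit] at hbad ⊢
    linarith
  refine csInf_le ⟨-m, fun s hs => ?_⟩ hmem
  obtain ⟨i, hi⟩ : (Finset.univ.filter fun i => v i ≤ s).Nonempty := by
    rw [← Finset.card_pos, ← Nat.cast_pos (α := ℝ)]
    have := (le_div_iff₀ hN).mp hs
    nlinarith
  linarith [hv i, (Finset.mem_filter.mp hi).2]

theorem cutoff_le_two_div (d : ℕ) {n : ℕ} (hn : 2 ≤ n) {α : ℝ} (hα : α ∈ Set.Ioo (0 : ℝ) 1)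
    (ω : Fin n → Euc d × Euc d) : cutoff α d n ω ≤ 2 / (α * ((n : ℝ) - 1)) := by
  have hn' : (2 : ℝ) ≤ n := by exact_mod_cast hn
  have h := sInf_quantile_le_div (v := fun π : Fin n → Bool => zetaHatPerm d n π ω)
    (m := 2 / ((n : ℝ) - 1)) (by apply div_pos <;> linarith) hα (sum_zetaHatPerm_eq_zero d n ω)
    fun π => (neg_div _ _).symm.trans_le (neg_two_div_le_zetaHat d hn _)
  rwa [Fintype.card_fun, Fintype.card_bool, Fintype.card_fin, Nat.cast_pow, Nat.cast_ofNat,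
    div_div, mul_comm] at h

theorem cutoff_bound_general
    (d n : ℕ) (hn : 2 ≤ n) (P μU : Measure (Euc d))
    (α : ℝ) (hα : α ∈ Set.Ioo (0:ℝ) 1) :
    ∀ᵐ ω ∂(sampleLaw d n P μU), cutoff α d n ω ≤ 2 / (α * ((n : ℝ) - 1)) :=
  ae_of_all _ (cutoff_le_two_div d hn hα)

/-- Deterministic bound on the resampling cutoff:
`c_{1-α} ≤ 2/(α(n-1))` holds with probability one, for every `P` and every `d`. -/
theorem cutoff_bound
    (d n : ℕ) (hn : 2 ≤ n) (P μU : Measure (Euc d)) [IsProbabilityMeasure P]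
    (hμU : isUnifSphere d μU) (α : ℝ) (hα : α ∈ Set.Ioo (0:ℝ) 1) :
    ∀ᵐ ω ∂(sampleLaw d n P μU), cutoff α d n ω ≤ 2 / (α * ((n : ℝ) - 1)) :=
  cutoff_bound_general d n hn P μU α hα

end
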